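/- Let P be an ambiguous pattern with at most 6 mines, and let S be an ambiguous grid state on the same grid that is consistent with P. Then S contains at most 5 flags. -/

import Mathlib

open scoped Classical

namespace Minesweeper

/-- The possible values of a cell in a grid state. -/
inductive CellState where
  | hidden : CellState
  | clue : Fin 9 → CellState
  | flag : CellState
  | mine : CellState
deriving DecidableEq

/-- The neighborhood of a cell: the cell itself together with all cells at
ℓ∞-distance 1 from it. -/
def nbhd {a b : ℕ} (c : Fin a × Fin b) : Finset (Fin a × Fin b) :=
  Finset.univ.filter (fun c' =>
    ((c.1 : ℤ) - (c'.1 : ℤ)).natAbs ≤ 1 ∧ ((c.2 : ℤ) - (c'.2 : ℤ)).natAbs ≤ 1)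

/-- The number of mines of `M` in the neighborhood of `c`. -/
def mineCount {a b : ℕ} (M : Fin a × Fin b → Bool) (c : Fin a × Fin b) : ℕ :=
  ((nbhd c).filter (fun c' => M c' = true)).card

/-- The total number of mines of a mine assignment. -/
def numMines {a b : ℕ} (M : Fin a × Fin b → Bool) : ℕ :=
  (Finset.univ.filter (fun c => M c = true)).card

/-- A mine assignment `M` and a grid state `S` are consistent. -/
def Consistent {a b : ℕ} (M : Fin a × Fin b → Bool) (S : Fin a × Fin b → CellState) : Prop :=
  ∀ c, S c = CellState.hidden
    ∨ (∃ k : Fin 9, S c = CellState.clue k ∧ (k : ℕ) = mineCount M c)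
    ∨ ((S c = CellState.flag ∨ S c = CellState.mine) ∧ M c = true)

/-- An algorithm assigns to every grid state having a hidden cell one of its hidden cells. -/
structure Algorithm (a b : ℕ) where
  move : (Fin a × Fin b → CellState) → Fin a × Fin b
  move_hidden : ∀ S : Fin a × Fin b → CellState,
    (∃ c, S c = CellState.hidden) → S (move S) = CellState.hidden

/-- Revealing the cell `c0`. -/
def reveal {a b : ℕ} (M : Fin a × Fin b → Bool) (S : Fin a × Fin b → CellState)
    (c0 : Fin a × Fin b) : Fin a × Fin b → CellState :=
  fun c => if c = c0 then
    (if M c0 = true then CellState.mine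
      else CellState.clue ⟨mineCount M c0 % 9, Nat.mod_lt _ (by norm_num)⟩)
    else S c

/-- The sequence of grid states obtained by running the algorithm `A` against the
mine assignment `M`, starting from the all-hidden state. -/
def gameState {a b : ℕ} (A : Algorithm a b) (M : Fin a × Fin b → Bool) :
    ℕ → (Fin a × Fin b → CellState)
  | 0 => fun _ => CellState.hidden
  | t + 1 => reveal M (gameState A M t) (A.move (gameState A M t))

/-- The algorithm `A` solves the mine assignment `M`. -/
def Solves {a b : ℕ} (A : Algorithm a b) (M : Fin a × Fin b → Bool) : Prop :=
  ∃ t : ℕ, (∀ c, gameState A M t c ≠ CellState.mine) ∧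
    (∀ c, gameState A M t c = CellState.hidden → M c = true)

/-- The probability of the event `E` under the random mine assignment on the `a × b` grid
in which each cell independently carries a mine with probability `p`. -/
noncomputable def mineProb (a b : ℕ) (p : ℝ) (E : Set (Fin a × Fin b → Bool)) : ℝ :=
  ∑ M : Fin a × Fin b → Bool,
    if M ∈ E then (∏ c : Fin a × Fin b, if M c = true then p else 1 - p) else 0

/-- The probability of the event `E` under the random mine assignment `M₀_p` that agrees
with `M₀` on the mines of `M₀` and puts a mine on each empty cell of `M₀` independently
with probability `p`. -/
noncomputable def mineProbAbove (a b : ℕ) (p : ℝ) (M₀ : Fin a × Fin b → Bool)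
    (E : Set (Fin a × Fin b → Bool)) : ℝ :=
  ∑ M : Fin a × Fin b → Bool,
    if M ∈ E then
      (∏ c : Fin a × Fin b,
        if M₀ c = true then (if M c = true then (1 : ℝ) else 0)
        else (if M c = true then p else 1 - p))
    else 0

/-- A pattern: no mines in the first/last two rows and columns, at least one mine in
the third and third-to-last rows and columns. -/
def IsPattern {h w : ℕ} (P : Fin h × Fin w → Bool) : Prop :=
  (∀ c, P c = true → 2 ≤ (c.1 : ℕ) ∧ (c.1 : ℕ) + 3 ≤ h ∧ 2 ≤ (c.2 : ℕ) ∧ (c.2 : ℕ) + 3 ≤ w)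
  ∧ (∃ c, P c = true ∧ (c.1 : ℕ) = 2) ∧ (∃ c, P c = true ∧ (c.1 : ℕ) + 3 = h)
  ∧ (∃ c, P c = true ∧ (c.2 : ℕ) = 2) ∧ (∃ c, P c = true ∧ (c.2 : ℕ) + 3 = w)

/-- An ambiguous grid state. -/
def AmbiguousState {a b : ℕ} (S : Fin a × Fin b → CellState) : Prop :=
  (∃ c, S c = CellState.hidden) ∧ (∀ c, S c ≠ CellState.mine) ∧
  ∀ c, S c = CellState.hidden →
    ∃ P P' : Fin a × Fin b → Bool, IsPattern P ∧ IsPattern P' ∧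
      Consistent P S ∧ Consistent P' S ∧ P c = true ∧ P' c = false

/-- An ambiguous pattern: a pattern consistent with some ambiguous grid state. -/
def AmbiguousPattern {a b : ℕ} (P : Fin a × Fin b → Bool) : Prop :=
  IsPattern P ∧ ∃ S : Fin a × Fin b → CellState, AmbiguousState S ∧ Consistent P S

/-- The pattern `P1` (rows and columns numbered from 0 to 7 here). -/
def P1 : Fin 8 × Fin 8 → Bool := fun c =>
  decide (((c.1 : ℕ), (c.2 : ℕ)) ∈ [(2,2),(2,5),(5,2),(5,5),(3,3),(4,4)])

/-- The pattern `P2` (rows and columns numbered from 0 to 7 here). -/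
def P2 : Fin 8 × Fin 8 → Bool := fun c =>
  decide (((c.1 : ℕ), (c.2 : ℕ)) ∈ [(2,2),(2,5),(5,2),(5,5),(3,4),(4,3)])

/-- `M` contains an occurrence of the pattern `P` at offset `(r, s)`. -/
def ContainsAt {a b h w : ℕ} (M : Fin a × Fin b → Bool) (P : Fin h × Fin w → Bool)
    (r s : ℕ) : Prop :=
  ∃ (hr : r + h ≤ a) (hs : s + w ≤ b),
    ∀ (i : Fin h) (j : Fin w), M (⟨r + i, by omega⟩, ⟨s + j, by omega⟩) = P (i, j)

/-- `M` contains an occurrence of the pattern `P`. -/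
def Contains {a b h w : ℕ} (M : Fin a × Fin b → Bool) (P : Fin h × Fin w → Bool) : Prop :=
  ∃ r s, ContainsAt M P r s

/-- The number of occurrences of the pattern `P` in `M`. -/
noncomputable def numOcc {a b h w : ℕ} (M : Fin a × Fin b → Bool)
    (P : Fin h × Fin w → Bool) : ℕ :=
  ((Finset.range a ×ˢ Finset.range b).filter (fun rs => ContainsAt M P rs.1 rs.2)).card

/-- The envelope of a grid state: the union of the neighborhoods of its hidden cells. -/
noncomputable def envelope {a b : ℕ} (S : Fin a × Fin b → CellState) :
    Finset (Fin a × Fin b) :=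
  Finset.univ.filter (fun c => ∃ c', S c' = CellState.hidden ∧ c ∈ nbhd c')

/-- The number of flags of `S` in the neighborhood of `c`. -/
def flagCount {a b : ℕ} (S : Fin a × Fin b → CellState) (c : Fin a × Fin b) : ℕ :=
  ((nbhd c).filter (fun c' => S c' = CellState.flag)).card

/-- The number of hidden cells of `S` in the neighborhood of `c`. -/
def hiddenCount {a b : ℕ} (S : Fin a × Fin b → CellState) (c : Fin a × Fin b) : ℕ :=
  ((nbhd c).filter (fun c' => S c' = CellState.hidden)).card

/-- A border cell of the envelope of `S`. -/
noncomputable def IsBorderCell {a b : ℕ} (S : Fin a × Fin b → CellState)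
    (c : Fin a × Fin b) : Prop :=
  c ∈ envelope S ∧ ((nbhd c).filter (fun c' => c' ∈ envelope S)).card < 9

/-- The orthogonal (horizontal/vertical) neighbors of a cell. -/
def orthNbrs {a b : ℕ} (c : Fin a × Fin b) : Finset (Fin a × Fin b) :=
  (nbhd c).filter (fun c' => c' ≠ c ∧ (c'.1 = c.1 ∨ c'.2 = c.2))

/-- A corner cell of the envelope of `S`: a border cell at least two of whose orthogonal
neighbors lie outside the envelope. -/
noncomputable def IsCornerCell {a b : ℕ} (S : Fin a × Fin b → CellState)
    (c : Fin a × Fin b) : Prop :=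
  IsBorderCell S c ∧ 2 ≤ ((orthNbrs c).filter (fun c' => c' ∉ envelope S)).card

/-- The number of mines of `M` in the `100 × 100` subgrid with upper-left offset `(r, s)`. -/
def subgridMineCount {a b : ℕ} (M : Fin a × Fin b → Bool) (r s : ℕ) : ℕ :=
  (Finset.univ.filter (fun c : Fin a × Fin b =>
    M c = true ∧ r ≤ (c.1 : ℕ) ∧ (c.1 : ℕ) < r + 100 ∧ s ≤ (c.2 : ℕ) ∧ (c.2 : ℕ) < s + 100)).card

/-- The cells revealed when starting from the upper-left corner and iteratively revealing
every cell in the neighborhood of a revealed cell with value 0. -/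
inductive Revealed {a b : ℕ} (M : Fin a × Fin b → Bool) : Fin a × Fin b → Prop where
  | corner (c : Fin a × Fin b) : (c.1 : ℕ) = 0 → (c.2 : ℕ) = 0 → Revealed M c
  | step (c c' : Fin a × Fin b) : Revealed M c → M c = false → mineCount M c = 0 →
      c' ∈ nbhd c → Revealed M c'

/-- A cell whose value in the auto-revealed grid state `S_{n,p}` is not the clue 0. -/
def NonzeroCell {a b : ℕ} (M : Fin a × Fin b → Bool) (c : Fin a × Fin b) : Prop :=
  ¬(Revealed M c ∧ M c = false ∧ mineCount M c = 0)

/-- Two cells lie in the same island of the auto-revealed grid state `S_{n,p}`: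
they are joined by a path of non-zero cells, consecutive ones at ℓ∞-distance 1. -/
def SameIsland {a b : ℕ} (M : Fin a × Fin b → Bool) (c c' : Fin a × Fin b) : Prop :=
  Relation.ReflTransGen
    (fun x y => NonzeroCell M x ∧ NonzeroCell M y ∧ x ≠ y ∧ y ∈ nbhd x) c c'

/-- The mine assignment at time `t` of the random mine process encoded by the
bijection `f` (the mine added at time `i + 1` is at cell `f i`). -/
def procAssign {a b : ℕ} (f : Fin (a * b) → Fin a × Fin b) (t : ℕ) :
    Fin a × Fin b → Bool :=
  fun c => decide (∃ i : Fin (a * b), (i : ℕ) < t ∧ f i = c)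

/-- The probability of the event `E` for the random mine process, realized as a uniformly
random bijective ordering of the cells of the grid. -/
noncomputable def procProb (a b : ℕ) (E : Set (Fin (a * b) → Fin a × Fin b)) : ℝ :=
  ((Finset.univ.filter
      (fun f : Fin (a * b) → Fin a × Fin b => Function.Bijective f ∧ f ∈ E)).card : ℝ) /
  ((Finset.univ.filter
      (fun f : Fin (a * b) → Fin a × Fin b => Function.Bijective f)).card : ℝ)

/-- The hitting time `τ`: the first time `t` at which the process contains an occurrence
of `P1` or `P2` (`⊤` if there is no such time). -/
noncomputable def tauProc {a b : ℕ} (f : Fin (a * b) → Fin a × Fin b) : ℕ∞ :=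
  sInf ((fun t : ℕ => (t : ℕ∞)) ''
    {t | Contains (procAssign f t) P1 ∨ Contains (procAssign f t) P2})

/-! Flags are mines of every consistent assignment, so `P` has at least as many mines as `S` has
flags, and six flags are exactly the mines of `P`. Then no hidden cell `c` is adjacent to a clue:
a consistent pattern with a mine at `c` contains the mines of `P` and one more mine around that
clue. So the hidden region is walled in by flags, and the neighbours preceding its first cell and
following its last cell in row-major order are already eight distinct flags. -/

section Flags

variable {a b : ℕ}

def flags (S : Fin a × Fin b → CellState) : Finset (Fin a × Fin b) :=
  Finset.univ.filter (fun c => S c = CellState.flag)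

def mines (M : Fin a × Fin b → Bool) : Finset (Fin a × Fin b) :=
  Finset.univ.filter (fun c => M c = true)

@[simp]
lemma mem_flags {S : Fin a × Fin b → CellState} {c : Fin a × Fin b} :
    c ∈ flags S ↔ S c = CellState.flag := by
  simp [flags]

@[simp]
lemma mem_mines {M : Fin a × Fin b → Bool} {c : Fin a × Fin b} :
    c ∈ mines M ↔ M c = true := by
  simp [mines]

lemma mem_nbhd_comm {c d : Fin a × Fin b} : c ∈ nbhd d ↔ d ∈ nbhd c := by
  simp only [nbhd, Finset.mem_filter, Finset.mem_univ, true_and]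
  omega

lemma Consistent.eq_true_of_flag {M : Fin a × Fin b → Bool} {S : Fin a × Fin b → CellState}
    (h : Consistent M S) {c : Fin a × Fin b} (hc : S c = CellState.flag) : M c = true := by
  rcases h c with h | ⟨k, hk, -⟩ | ⟨-, h⟩ <;> simp_all

lemma Consistent.clue_eq_mineCount {M : Fin a × Fin b → Bool} {S : Fin a × Fin b → CellState}
    (h : Consistent M S) {c : Fin a × Fin b} {k : Fin 9} (hc : S c = CellState.clue k) :
    (k : ℕ) = mineCount M c := by
  rcases h c with h | ⟨k', hk', hv⟩ | ⟨h | h, -⟩ <;> simp_all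

lemma Consistent.flags_subset_mines {M : Fin a × Fin b → Bool} {S : Fin a × Fin b → CellState}
    (h : Consistent M S) : flags S ⊆ mines M :=
  fun _ hc => mem_mines.2 (h.eq_true_of_flag (mem_flags.1 hc))

lemma mineCount_lt_mineCount {M Q : Fin a × Fin b → Bool} (hMQ : mines M ⊆ mines Q)
    {c d : Fin a × Fin b} (hc : c ∈ nbhd d) (hMc : M c = false) (hQc : Q c = true) :
    mineCount M d < mineCount Q d := by
  refine Finset.card_lt_card ((Finset.ssubset_iff_of_subset ?_).2 ⟨c, ?_, ?_⟩)
  · intro x hx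
    simp only [Finset.mem_filter] at hx ⊢
    exact ⟨hx.1, mem_mines.1 (hMQ (mem_mines.2 hx.2))⟩
  · simp [hc, hQc]
  · simp [hMc]

end Flags

section Ambiguous

variable {a b : ℕ} {S : Fin a × Fin b → CellState}

lemma AmbiguousState.interior_of_hidden (hS : AmbiguousState S) {c : Fin a × Fin b}
    (hc : S c = CellState.hidden) :
    2 ≤ (c.1 : ℕ) ∧ (c.1 : ℕ) + 3 ≤ a ∧ 2 ≤ (c.2 : ℕ) ∧ (c.2 : ℕ) + 3 ≤ b := by
  obtain ⟨Q, -, hQ, -, -, -, hQc, -⟩ := hS.2.2 c hc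
  exact hQ.1 c hQc

lemma AmbiguousState.hidden_or_flag_of_mem_nbhd (hS : AmbiguousState S)
    {M : Fin a × Fin b → Bool} (hM : Consistent M S) (hflags : mines M ⊆ flags S)
    {c d : Fin a × Fin b} (hc : S c = CellState.hidden) (hd : d ∈ nbhd c) :
    S d = CellState.hidden ∨ S d = CellState.flag := by
  obtain ⟨Q, -, -, -, hQ, -, hQc, -⟩ := hS.2.2 c hc
  have hMc : M c = false :=
    Bool.eq_false_iff.2 fun hMc => by simpa [hc] using hflags (mem_mines.2 hMc)
  -- a clue at `d` would count the extra mine `c` of `Q`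
  have hlt := mineCount_lt_mineCount (hflags.trans hQ.flags_subset_mines)
    (mem_nbhd_comm.1 hd) hMc hQc
  rcases hSd : S d with _ | k | _ | _
  · exact Or.inl rfl
  · rw [← hM.clue_eq_mineCount hSd, ← hQ.clue_eq_mineCount hSd] at hlt
    exact (lt_irrefl _ hlt).elim
  · exact Or.inr rfl
  · exact absurd hSd (hS.2.1 d)

end Ambiguous

section Geometry

variable {a b : ℕ}

lemma four_le_card_nbhd_filter_toLex_lt (c : Fin a × Fin b) (hr : 1 ≤ (c.1 : ℕ))
    (hl : 1 ≤ (c.2 : ℕ)) (hrt : (c.2 : ℕ) + 1 < b) :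
    4 ≤ ((nbhd c).filter (fun d => toLex d < toLex c)).card := by
  obtain ⟨⟨i, hi⟩, ⟨j, hj⟩⟩ := c
  simp only at hr hl hrt
  let up (k : ℕ) (hk : k < b) : Fin a × Fin b := (⟨i - 1, by omega⟩, ⟨k, hk⟩)
  calc 4 = ({up (j - 1) (by omega), up j hj, up (j + 1) hrt, (⟨i, hi⟩, ⟨j - 1, by omega⟩)} :
        Finset (Fin a × Fin b)).card := by
        rw [Finset.card_insert_of_notMem, Finset.card_insert_of_notMem,
          Finset.card_pair] <;> simp [up, Prod.ext_iff, Fin.ext_iff]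
        all_goals omega
    _ ≤ _ := by
      apply Finset.card_le_card
      intro d hd
      simp only [Finset.mem_insert, Finset.mem_singleton] at hd
      simp only [nbhd, Finset.mem_filter, Finset.mem_univ, true_and, Prod.Lex.toLex_lt_toLex]
      rcases hd with rfl | rfl | rfl | rfl <;> simp [up, Fin.lt_def]
      all_goals omega

lemma four_le_card_nbhd_filter_toLex_gt (c : Fin a × Fin b) (hr : (c.1 : ℕ) + 1 < a)
    (hl : 1 ≤ (c.2 : ℕ)) (hrt : (c.2 : ℕ) + 1 < b) :
    4 ≤ ((nbhd c).filter (fun d => toLex c < toLex d)).card := by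
  obtain ⟨⟨i, hi⟩, ⟨j, hj⟩⟩ := c
  simp only at hr hl hrt
  let down (k : ℕ) (hk : k < b) : Fin a × Fin b := (⟨i + 1, hr⟩, ⟨k, hk⟩)
  calc 4 = ({down (j - 1) (by omega), down j hj, down (j + 1) hrt, (⟨i, hi⟩, ⟨j + 1, hrt⟩)} :
        Finset (Fin a × Fin b)).card := by
        rw [Finset.card_insert_of_notMem, Finset.card_insert_of_notMem,
          Finset.card_pair] <;> simp [down, Prod.ext_iff, Fin.ext_iff]
        all_goals omega
    _ ≤ _ := by
      apply Finset.card_le_card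
      intro d hd
      simp only [Finset.mem_insert, Finset.mem_singleton] at hd
      simp only [nbhd, Finset.mem_filter, Finset.mem_univ, true_and, Prod.Lex.toLex_lt_toLex]
      rcases hd with rfl | rfl | rfl | rfl <;> simp [down, Fin.lt_def]
      all_goals omega

def hiddenCells (S : Fin a × Fin b → CellState) : Finset (Fin a × Fin b) :=
  Finset.univ.filter (fun c => S c = CellState.hidden)

@[simp]
lemma mem_hiddenCells {S : Fin a × Fin b → CellState} {c : Fin a × Fin b} :
    c ∈ hiddenCells S ↔ S c = CellState.hidden := by
  simp [hiddenCells]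

lemma eight_le_card_flags {S : Fin a × Fin b → CellState} (hne : ∃ c, S c = CellState.hidden)
    (hint : ∀ c, S c = CellState.hidden →
      1 ≤ (c.1 : ℕ) ∧ (c.1 : ℕ) + 1 < a ∧ 1 ≤ (c.2 : ℕ) ∧ (c.2 : ℕ) + 1 < b)
    (hnbhd : ∀ c d, S c = CellState.hidden → d ∈ nbhd c →
      S d = CellState.hidden ∨ S d = CellState.flag) :
    8 ≤ (flags S).card := by
  have hH : (hiddenCells S).Nonempty :=
    let ⟨c, hc⟩ := hne; ⟨c, by simpa using hc⟩
  obtain ⟨first, hfirst, hfirst_le⟩ := (hiddenCells S).exists_min_image toLex hH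
  obtain ⟨last, hlast, hle_last⟩ := (hiddenCells S).exists_max_image toLex hH
  simp only [mem_hiddenCells] at hfirst hlast hfirst_le hle_last
  set before := (nbhd first).filter (fun d => toLex d < toLex first)
  set after := (nbhd last).filter (fun d => toLex last < toLex d)
  have hbefore : before ⊆ flags S := by
    intro d hd
    simp only [before, Finset.mem_filter] at hd
    have hd' : S d ≠ CellState.hidden := fun h => (hfirst_le d h).not_gt hd.2
    simpa [hd'] using hnbhd first d hfirst hd.1
  have hafter : after ⊆ flags S := by
    intro d hd
    simp only [after, Finset.mem_filter] at hd
    have hd' : S d ≠ CellState.hidden := fun h => (hle_last d h).not_gt hd.2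
    simpa [hd'] using hnbhd last d hlast hd.1
  have hdisj : Disjoint before after := by
    refine Finset.disjoint_left.2 fun d hb ha => ?_
    simp only [before, after, Finset.mem_filter] at hb ha
    exact (hb.2.trans_le (hle_last first hfirst)).not_gt ha.2
  obtain ⟨h1, -, h2, h3⟩ := hint first hfirst
  obtain ⟨-, h4, h5, h6⟩ := hint last hlast
  calc 8 ≤ before.card + after.card :=
        add_le_add (four_le_card_nbhd_filter_toLex_lt first h1 h2 h3)
          (four_le_card_nbhd_filter_toLex_gt last h4 h5 h6)
    _ = (before ∪ after).card := (Finset.card_union_of_disjoint hdisj).symm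
    _ ≤ (flags S).card := Finset.card_le_card (Finset.union_subset hbefore hafter)

end Geometry

theorem statement_8_general {a b : ℕ} (P : Fin a × Fin b → Bool) (S : Fin a × Fin b → CellState)
    (hm : numMines P ≤ 6)
    (hS : AmbiguousState S) (hcons : Consistent P S) :
    (Finset.univ.filter (fun c => S c = CellState.flag)).card ≤ 5 := by
  by_contra! h6
  have hsub : flags S ⊆ mines P := hcons.flags_subset_mines
  have hmines : (mines P).card ≤ 6 := hm
  have hflags : mines P ⊆ flags S :=
    (Finset.eq_of_subset_of_card_le hsub (hmines.trans h6)).symm.subset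
  have h8 : 8 ≤ (flags S).card :=
    eight_le_card_flags hS.1 (fun c hc => by have := hS.interior_of_hidden hc; omega)
      fun c d hc hd => hS.hidden_or_flag_of_mem_nbhd hcons hflags hc hd
  have := Finset.card_le_card hsub
  omega

/-- an ambiguous grid state consistent with an ambiguous pattern with at
most 6 mines contains at most 5 flags. -/
theorem statement_8 {a b : ℕ} (P : Fin a × Fin b → Bool) (S : Fin a × Fin b → CellState)
    (hP : IsPattern P) (hm : numMines P ≤ 6)
    (hS : AmbiguousState S) (hcons : Consistent P S) :
    (Finset.univ.filter (fun c => S c = CellState.flag)).card ≤ 5 :=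
  statement_8_general P S hm hS hcons

end Minesweeper
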